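/- If −1 < λ < 0 and β < −1, then every fixed point of f is unstable, and every trajectory not starting at a fixed point converges to the stable 2-periodic orbit ±Q = (∓a/(1+λ), ±1) (meaning its even-indexed and odd-indexed subsequences converge to Q and −Q in one of the two orders). -/
import Mathlib


open Filter Topology

/-- The clipping function Φ. -/
noncomputable def Phi (t : ℝ) : ℝ := if t < -1 then -1 else if t ≤ 1 then t else 1

/-- The map f(x,s) = (λx + a·s, Φ(s + x' − x)). -/
noncomputable def f (lam a : ℝ) (p : ℝ × ℝ) : ℝ × ℝ :=
  (lam * p.1 + a * p.2, Phi (p.2 + (lam * p.1 + a * p.2) - p.1))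

/-- Membership in the strip L = {(x,s) : |s| ≤ 1}. -/
def inL (p : ℝ × ℝ) : Prop := |p.2| ≤ 1

/-- A trajectory of the map f, staying in the strip L. -/
def IsTraj (lam a : ℝ) (z : ℕ → ℝ × ℝ) : Prop :=
  (∀ n, inL (z n)) ∧ ∀ n, z (n + 1) = f lam a (z n)

/-- The set of fixed points of f in the strip L. -/
def fixedSet (lam a : ℝ) : Set (ℝ × ℝ) := {p | inL p ∧ f lam a p = p}

/-- Lyapunov stability of a fixed point. -/
def IsStableFixed (lam a : ℝ) (P : ℝ × ℝ) : Prop :=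
  ∀ ε > 0, ∃ δ > 0, ∀ z : ℕ → ℝ × ℝ, IsTraj lam a z → dist (z 0) P < δ →
    ∀ n, dist (z n) P < ε

/-- Semi-stability of a fixed point. -/
def IsSemiStable (lam a : ℝ) (P : ℝ × ℝ) : Prop :=
  ∃ U₁ U₂ : Set (ℝ × ℝ), IsOpen U₁ ∧ IsOpen U₂ ∧
    U₁ ⊆ {p | |p.2| < 1} ∧ U₂ ⊆ {p | |p.2| < 1} ∧
    P ∈ frontier U₁ ∧ P ∈ frontier U₂ ∧
    (∀ ε > 0, ∃ δ > 0, ∀ z : ℕ → ℝ × ℝ, IsTraj lam a z → z 0 ∈ U₁ →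
      dist (z 0) P < δ → ∀ n, dist (z n) P < ε) ∧
    (∃ ε₀ > 0, ∀ z : ℕ → ℝ × ℝ, IsTraj lam a z → z 0 ∈ U₂ →
      ∃ n, ε₀ ≤ dist (z n) P)

/-- Stability of a set (e.g. a periodic orbit) for the dynamics of f. -/
def IsStableSet (lam a : ℝ) (O : Set (ℝ × ℝ)) : Prop :=
  ∀ ε > 0, ∃ δ > 0, ∀ z : ℕ → ℝ × ℝ, IsTraj lam a z →
    Metric.infDist (z 0) O < δ → ∀ n, Metric.infDist (z n) O < ε

/-- O is a periodic orbit of f. -/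
def IsPeriodicOrbit (lam a : ℝ) (O : Set (ℝ × ℝ)) : Prop :=
  ∃ P : ℝ × ℝ, ∃ m : ℕ, 1 ≤ m ∧ inL P ∧ (f lam a)^[m] P = P ∧
    O = {q | ∃ i < m, (f lam a)^[i] P = q}

/-- P is a periodic point of minimal period k. -/
def HasMinPeriod (lam a : ℝ) (P : ℝ × ℝ) (k : ℕ) : Prop :=
  (f lam a)^[k] P = P ∧ ∀ j, 1 ≤ j → j < k → (f lam a)^[j] P ≠ P

/-- Convergence of a trajectory to the 2-periodic orbit {Q, Q'} (in one of the two orders). -/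
def ConvTo2Orbit (z : ℕ → ℝ × ℝ) (Q Q' : ℝ × ℝ) : Prop :=
  (Tendsto (fun n => z (2 * n)) atTop (𝓝 Q) ∧
    Tendsto (fun n => z (2 * n + 1)) atTop (𝓝 Q')) ∨
  (Tendsto (fun n => z (2 * n)) atTop (𝓝 Q') ∧
    Tendsto (fun n => z (2 * n + 1)) atTop (𝓝 Q))













lemma Phi_of_le {t : ℝ} (h : t ≤ -1) : Phi t = -1 := by
  unfold Phi; split_ifs <;> first | rfl | linarith

lemma Phi_of_ge {t : ℝ} (h : 1 ≤ t) : Phi t = 1 := by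
  unfold Phi; split_ifs <;> first | rfl | linarith

lemma Phi_of_mem {t : ℝ} (h1 : -1 ≤ t) (h2 : t ≤ 1) : Phi t = t := by
  unfold Phi; split_ifs <;> first | rfl | linarith

lemma Phi_mem (t : ℝ) : |Phi t| ≤ 1 := by
  unfold Phi; split_ifs <;> rw [abs_le] <;> constructor <;> linarith

lemma Phi_eq_self_of_abs_lt {t : ℝ} (h : |Phi t| < 1) : Phi t = t := by
  unfold Phi at *; split_ifs at * <;> first | rfl | (simp [abs_le] at h; linarith [h.1, h.2]) | (norm_num at h)

lemma Phi_neg (t : ℝ) : Phi (-t) = - Phi t := by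
  unfold Phi; split_ifs <;> linarith

lemma f_inL (lam a : ℝ) (p : ℝ × ℝ) : inL (f lam a p) := Phi_mem _

lemma f_neg (lam a : ℝ) (p : ℝ × ℝ) : f lam a (-p) = - f lam a p := by
  unfold f
  simp only [Prod.fst_neg, Prod.snd_neg, Prod.neg_mk]
  refine Prod.ext ?_ ?_ <;> simp only
  · ring
  · rw [show -p.2 + (lam * -p.1 + a * -p.2) - -p.1 = -(p.2 + (lam * p.1 + a * p.2) - p.1) by ring,
      Phi_neg]

lemma mem_fixed_iff {lam a : ℝ} {p : ℝ × ℝ} (hp : inL p) :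
    p ∈ fixedSet lam a ↔ (1 - lam) * p.1 = a * p.2 := by
  constructor
  · rintro ⟨-, hf⟩
    have h1 := congrArg Prod.fst hf
    simp only [f] at h1
    linarith [h1]
  · intro h
    refine ⟨hp, ?_⟩
    have hx : lam * p.1 + a * p.2 = p.1 := by linarith
    unfold f
    rw [hx]
    have : p.2 + p.1 - p.1 = p.2 := by ring
    rw [this]
    have hm := abs_le.mp hp
    rw [Phi_of_mem hm.1 hm.2]

lemma neg_mem_fixed {lam a : ℝ} {p : ℝ × ℝ} (h : p ∈ fixedSet lam a) : -p ∈ fixedSet lam a := by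
  refine ⟨?_, ?_⟩
  · show |(-p).2| ≤ 1
    rw [Prod.snd_neg, abs_neg]; exact h.1
  · rw [f_neg, h.2]

lemma IsTraj_neg {lam a : ℝ} {z : ℕ → ℝ × ℝ} (hz : IsTraj lam a z) :
    IsTraj lam a (fun n => -(z n)) := by
  constructor
  · intro n; show |(-(z n)).2| ≤ 1; rw [Prod.snd_neg, abs_neg]; exact hz.1 n
  · intro n; simp only [hz.2 n, f_neg]

section Part2
variable {lam a : ℝ}

lemma aux_top (h1 : -1 < lam) (h2 : lam < 0) (h3 : lam + a < -1) {x s : ℝ}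
    (hs : |s| ≤ 1) (hf : (1 - lam) * (lam * x + a * s) = a)
    (hτ : 1 ≤ s + (lam * x + a * s) - x) : (1 - lam) * x = a * s := by
  have hs1 : s ≤ 1 := (abs_le.mp hs).2
  have hge : 1 ≤ s := by
    nlinarith [mul_nonneg (by linarith : (0:ℝ) ≤ -lam)
      (by linarith : (0:ℝ) ≤ s + (lam * x + a * s) - x - 1), hf,
      mul_nonneg (by linarith : (0:ℝ) ≤ -(lam + a) - 1) (by linarith : (0:ℝ) ≤ 1 - s)]
  have hseq : s = 1 := le_antisymm hs1 hge
  subst hseq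
  have hfac : lam * ((1 - lam) * x - a) = 0 := by linear_combination hf
  rcases mul_eq_zero.mp hfac with h | h
  · linarith
  · linarith
end Part2

section Part3
variable {lam a : ℝ}

lemma no_return (h1 : -1 < lam) (h2 : lam < 0) (h3 : lam + a < -1) {p : ℝ × ℝ}
    (hp : inL p) (hf : f lam a p ∈ fixedSet lam a) : p ∈ fixedSet lam a := by
  rw [mem_fixed_iff (f_inL lam a p)] at hf
  rw [mem_fixed_iff hp]
  simp only [f] at hf
  set τ := p.2 + (lam * p.1 + a * p.2) - p.1 with hτdef
  rcases le_or_gt 1 τ with hτ | hτ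
  · rw [Phi_of_ge hτ] at hf
    rw [mul_one] at hf
    exact aux_top h1 h2 h3 hp hf hτ
  rcases le_or_gt τ (-1) with hτ' | hτ'
  · rw [Phi_of_le hτ'] at hf
    have hs : |(-p.2)| ≤ 1 := by rw [abs_neg]; exact hp
    have hf' : (1 - lam) * (lam * (-p.1) + a * (-p.2)) = a := by linarith [hf]
    have hτ'' : 1 ≤ (-p.2) + (lam * (-p.1) + a * (-p.2)) - (-p.1) := by
      rw [hτdef] at hτ'; linarith
    have := aux_top h1 h2 h3 hs hf' hτ''
    linarith
  · rw [Phi_of_mem (le_of_lt hτ') (le_of_lt hτ)] at hf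
    have hfac : (lam + a) * ((1 - lam) * p.1 - a * p.2) = 0 := by
      rw [hτdef] at hf; linear_combination hf
    rcases mul_eq_zero.mp hfac with h | h
    · linarith
    · linarith

lemma not_fixed_all (h1 : -1 < lam) (h2 : lam < 0) (h3 : lam + a < -1) {z : ℕ → ℝ × ℝ}
    (hz : IsTraj lam a z) (h0 : z 0 ∉ fixedSet lam a) : ∀ n, z n ∉ fixedSet lam a := by
  intro n
  induction n with
  | zero => exact h0
  | succ n ih =>
    intro hmem
    exact ih (no_return h1 h2 h3 (hz.1 n) (by rwa [← hz.2 n]))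

lemma reach (h1 : -1 < lam) (h2 : lam < 0) (h3 : lam + a < -1) {z : ℕ → ℝ × ℝ}
    (hz : IsTraj lam a z) (h0 : z 0 ∉ fixedSet lam a) :
    ∃ m, (z m).2 = 1 ∨ (z m).2 = -1 := by
  by_contra hc
  push_neg at hc
  have hs : ∀ n, |(z n).2| < 1 := by
    intro n
    rcases lt_trichotomy ((z n).2) 1 with h | h | h
    · rcases lt_trichotomy ((z n).2) (-1) with h' | h' | h'
      · exfalso; have h'' : |(z n).2| ≤ 1 := hz.1 n; rw [abs_le] at h''; linarith [h''.1]
      · exact absurd h' (hc n).2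
      · rw [abs_lt]; exact ⟨h', h⟩
    · exact absurd h (hc n).1
    · exfalso; have h'' : |(z n).2| ≤ 1 := hz.1 n; rw [abs_le] at h''; linarith [h''.2]
  set β := lam + a with hβdef
  have h1β : (0:ℝ) < 1 - β := by linarith
  set c := (z 0).2 - (z 0).1 with hcdef
  set xb := a * c / (1 - β) with hxbdef
  have hxb : (1 - β) * xb = a * c := by
    rw [hxbdef]; field_simp
  set d := (z 0).1 - xb with hddef
  have hd : d ≠ 0 := by
    intro h
    apply h0
    rw [mem_fixed_iff (hz.1 0)]
    have hx0 : (z 0).1 = xb := by rw [hddef] at h; linarith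
    rw [hx0] at hcdef ⊢
    linear_combination hxb + a * hcdef
  have key : ∀ n, (z n).1 = xb + β ^ n * d ∧ (z n).2 = xb + β ^ n * d + c := by
    intro n
    induction n with
    | zero =>
      constructor
      · rw [pow_zero, hddef]; ring
      · rw [pow_zero, hddef, hcdef]; ring
    | succ n ih =>
      have hst := hz.2 n
      have hx' : (z (n+1)).1 = xb + β ^ (n+1) * d := by
        rw [hst]
        show lam * (z n).1 + a * (z n).2 = _
        rw [ih.1, ih.2, hβdef]
        linear_combination (-1 : ℝ) * hxb
      refine ⟨hx', ?_⟩
      have hsnd : (z (n+1)).2 = Phi ((z n).2 + (lam * (z n).1 + a * (z n).2) - (z n).1) := by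
        rw [hst]; rfl
      have hΦ : |Phi ((z n).2 + (lam * (z n).1 + a * (z n).2) - (z n).1)| < 1 := by
        rw [← hsnd]; exact hs (n+1)
      rw [hsnd, Phi_eq_self_of_abs_lt hΦ, ih.1, ih.2, hβdef]
      linear_combination (-1 : ℝ) * hxb
  have hb1 : 1 < |β| := by
    rw [abs_of_neg (by linarith : β < 0)]; linarith
  obtain ⟨n, hn⟩ := pow_unbounded_of_one_lt ((1 + |c| + |xb|) / |d|) hb1
  have hdpos : 0 < |d| := abs_pos.mpr hd
  have hn' : 1 + |c| + |xb| < |β| ^ n * |d| := by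
    rw [div_lt_iff₀ hdpos] at hn; linarith
  have hb : |(z n).2| ≤ 1 := hz.1 n
  have hkey := (key n).2
  have h5 : β ^ n * d = (z n).2 + (-xb) + (-c) := by rw [hkey]; ring
  have h6 : |β ^ n * d| ≤ |(z n).2| + |xb| + |c| := by
    rw [h5]
    calc |(z n).2 + (-xb) + (-c)| ≤ |(z n).2 + (-xb)| + |(-c)| := abs_add_le _ _
      _ ≤ |(z n).2| + |(-xb)| + |(-c)| := by linarith [abs_add_le ((z n).2) (-xb)]
      _ = |(z n).2| + |xb| + |c| := by rw [abs_neg, abs_neg]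
  rw [abs_mul, abs_pow] at h6
  linarith

end Part3

/-- The trajectory reaches the absorbing region G ∪ (−G). -/
def Exits (lam a : ℝ) (z : ℕ → ℝ × ℝ) : Prop :=
  ∃ N q, (z N = (q, 1) ∧ (2 + a) / (1 - lam) ≤ q) ∨
    (z N = (q, -1) ∧ q ≤ -((2 + a) / (1 - lam)))

section Part4
variable {lam a : ℝ}

lemma run (h1 : -1 < lam) (h2 : lam < 0) (h3 : lam + a < -1) {z : ℕ → ℝ × ℝ}
    (hz : IsTraj lam a z) {m : ℕ} {p : ℝ} (hm : z m = (p, 1))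
    (hpl : a < (1 - lam) * p) (hpr : p < (2 + a) / (1 - lam)) :
    Exits lam a z ∨ ∃ N p', z N = (p', 1) ∧
      (1 - (1 - lam) * (1 + lam + a)) * ((1 - lam) * p - a) ≤ (1 - lam) * p' - a := by
  have h1l : (0:ℝ) < 1 - lam := by linarith
  have h1b : (0:ℝ) < 1 - (lam + a) := by linarith
  have hr : (1 - lam) * ((2 + a) / (1 - lam)) = 2 + a := by field_simp
  have hr1 : (2 + a) / (1 - lam) < 1 := by rw [div_lt_one h1l]; linarith
  set xb := a * (1 - p) / (1 - (lam + a)) with hxbd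
  have hxb : (1 - (lam + a)) * xb = a * (1 - p) := by rw [hxbd]; field_simp
  set d := p - xb with hdd
  clear_value xb d
  have hφ : (1 - (lam + a)) * d = (1 - lam) * p - a := by
    rw [hdd]; linear_combination -hxb
  have hd : 0 < d := by
    by_contra hng; push_neg at hng
    nlinarith [mul_nonneg h1b.le (neg_nonneg.mpr hng)]
  have key : ∀ j, (z (m + j) = (xb + (lam + a) ^ j * d, xb + (lam + a) ^ j * d + (1 - p))) ∨
      (Exits lam a z ∨ ∃ N p', z N = (p', 1) ∧
        (1 - (1 - lam) * (1 + lam + a)) * ((1 - lam) * p - a) ≤ (1 - lam) * p' - a) := by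
    intro j
    induction j with
    | zero =>
      left
      simp only [Nat.add_zero, hm, pow_zero]
      refine Prod.ext ?_ ?_ <;> simp only
      · rw [hdd]; ring
      · rw [hdd]; ring
    | succ j ih =>
      rcases ih with hP | hC
      · have hst := hz.2 (m + j)
        rw [hP] at hst
        simp only [f] at hst
        have hx' : lam * (xb + (lam + a) ^ j * d) + a * (xb + (lam + a) ^ j * d + (1 - p))
            = xb + (lam + a) ^ (j + 1) * d := by linear_combination -hxb
        rw [show (xb + (lam + a) ^ j * d + (1 - p))
              + (lam * (xb + (lam + a) ^ j * d) + a * (xb + (lam + a) ^ j * d + (1 - p)))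
              - (xb + (lam + a) ^ j * d) = (xb + (lam + a) ^ (j + 1) * d) + (1 - p) from by
            linear_combination hx', hx'] at hst
        rcases le_or_gt ((xb + (lam + a) ^ (j + 1) * d) + (1 - p)) (-1) with hC1 | hC1
        · right; left
          refine ⟨m + j + 1, xb + (lam + a) ^ (j + 1) * d, Or.inr ⟨?_, ?_⟩⟩
          · show z (m + j + 1) = _
            rw [hst, Phi_of_le hC1]
          · have e1 : xb + (lam + a) ^ (j + 1) * d ≤ p - 2 := by linarith
            have e2 : p - 2 ≤ -((2 + a) / (1 - lam)) := by linarith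
            linarith
        rcases lt_or_ge ((xb + (lam + a) ^ (j + 1) * d) + (1 - p)) 1 with hC2 | hC2
        · left
          show z (m + j + 1) = _
          rw [hst, Phi_of_mem (le_of_lt hC1) (le_of_lt hC2)]
        · -- top clip
          have hge : p ≤ xb + (lam + a) ^ (j + 1) * d := by linarith
          have h7 : 1 * d ≤ (lam + a) ^ (j + 1) * d := by rw [hdd] at *; linarith
          have hpow : (1:ℝ) ≤ (lam + a) ^ (j + 1) := le_of_mul_le_mul_right (by linarith) hd
          rcases Nat.even_or_odd (j + 1) with he | ho
          · obtain ⟨t, ht⟩ := he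
            have hβ2 : (1:ℝ) ≤ (lam + a) ^ 2 := by nlinarith
            have hp2 : (lam + a) ^ 2 ≤ (lam + a) ^ (j + 1) := by
              rw [ht, ← two_mul, pow_mul]
              exact le_self_pow₀ hβ2 (by omega)
            right; right
            refine ⟨m + j + 1, xb + (lam + a) ^ (j + 1) * d, ?_, ?_⟩
            · show z (m + j + 1) = _
              rw [hst, Phi_of_ge hC2]
            · have hid : (1 - lam) * (xb + (lam + a) ^ 2 * d) - a
                  = (1 - (1 - lam) * (1 + lam + a)) * ((1 - lam) * p - a) := by
                linear_combination ((1 - lam) * (1 + lam + a)) * hxb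
                  + ((1 - lam) * (lam + a) ^ 2) * hdd
              have hmono : (lam + a) ^ 2 * d ≤ (lam + a) ^ (j + 1) * d :=
                mul_le_mul_of_nonneg_right hp2 hd.le
              nlinarith [mul_nonneg h1l.le (sub_nonneg.mpr hmono)]
          · exfalso
            have : (lam + a) ^ (j + 1) < 0 := ho.pow_neg (by linarith)
            linarith
      · exact Or.inr hC
  have hb1 : 1 < -(lam + a) := by linarith
  obtain ⟨n, hn⟩ := pow_unbounded_of_one_lt ((2 + |xb| + |1 - p|) / d) hb1
  have hn' : 2 + |xb| + |1 - p| < (-(lam + a)) ^ n * d := by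
    rw [div_lt_iff₀ hd] at hn; linarith
  rcases key n with hP | hC
  · exfalso
    have hb : |(z (m + n)).2| ≤ 1 := hz.1 (m + n)
    rw [hP] at hb
    simp only at hb
    have h5 : (lam + a) ^ n * d = (xb + (lam + a) ^ n * d + (1 - p)) + (-xb) + (-(1 - p)) := by
      ring
    have h6 : |(lam + a) ^ n * d| ≤ 1 + |xb| + |1 - p| := by
      rw [h5]
      calc |(xb + (lam + a) ^ n * d + (1 - p)) + (-xb) + (-(1 - p))|
          ≤ |(xb + (lam + a) ^ n * d + (1 - p)) + (-xb)| + |(-(1 - p))| := abs_add_le _ _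
        _ ≤ |xb + (lam + a) ^ n * d + (1 - p)| + |(-xb)| + |(-(1 - p))| := by
            linarith [abs_add_le (xb + (lam + a) ^ n * d + (1 - p)) (-xb)]
        _ = |xb + (lam + a) ^ n * d + (1 - p)| + |xb| + |1 - p| := by rw [abs_neg, abs_neg]
        _ ≤ 1 + |xb| + |1 - p| := by linarith
    have h7 : |(lam + a) ^ n * d| = (-(lam + a)) ^ n * d := by
      rw [abs_mul, abs_pow, abs_of_pos hd, abs_of_neg (show lam + a < 0 by linarith)]
    linarith
  · exact hC

end Part4

section Part5
variable {lam a : ℝ}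

lemma grow (h1 : -1 < lam) (h2 : lam < 0) (h3 : lam + a < -1) {z : ℕ → ℝ × ℝ}
    (hz : IsTraj lam a z) :
    ∀ (k : ℕ) (m : ℕ) (p : ℝ), z m = (p, 1) → a < (1 - lam) * p →
      2 < (1 - (1 - lam) * (1 + lam + a)) ^ k * ((1 - lam) * p - a) → Exits lam a z := by
  have h1l : (0:ℝ) < 1 - lam := by linarith
  have hγ : 1 < 1 - (1 - lam) * (1 + lam + a) := by nlinarith
  intro k
  induction k with
  | zero =>
    intro m p hm hpl hgr
    rw [pow_zero, one_mul] at hgr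
    refine ⟨m, p, Or.inl ⟨hm, ?_⟩⟩
    rw [div_le_iff₀ h1l]; linarith
  | succ k ih =>
    intro m p hm hpl hgr
    rcases le_or_gt ((2 + a) / (1 - lam)) p with hge | hlt
    · exact ⟨m, p, Or.inl ⟨hm, hge⟩⟩
    rcases run h1 h2 h3 hz hm hpl hlt with he | ⟨N, p', hN, hgrow⟩
    · exact he
    refine ih N p' hN ?_ ?_
    · -- a < (1-lam) p' since φ(p') ≥ γ φ(p) > 0
      nlinarith [mul_pos (show (0:ℝ) < 1 - (1 - lam) * (1 + lam + a) by linarith)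
        (show (0:ℝ) < (1 - lam) * p - a by linarith)]
    · have hpos : (0:ℝ) < (1 - (1 - lam) * (1 + lam + a)) ^ k := by positivity
      have := mul_le_mul_of_nonneg_left hgrow hpos.le
      calc (2:ℝ) < (1 - (1 - lam) * (1 + lam + a)) ^ (k + 1) * ((1 - lam) * p - a) := hgr
        _ = (1 - (1 - lam) * (1 + lam + a)) ^ k
            * ((1 - (1 - lam) * (1 + lam + a)) * ((1 - lam) * p - a)) := by ring
        _ ≤ (1 - (1 - lam) * (1 + lam + a)) ^ k * ((1 - lam) * p' - a) := this

lemma exits_neg {z : ℕ → ℝ × ℝ} (h : Exits lam a (fun n => -(z n))) : Exits lam a z := by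
  obtain ⟨N, q, hc | hc⟩ := h
  · refine ⟨N, -q, Or.inr ⟨?_, by linarith [hc.2]⟩⟩
    have := hc.1
    simp only at this
    have : z N = -(q, (1:ℝ)) := by rw [← this]; simp
    rw [this]; rfl
  · refine ⟨N, -q, Or.inl ⟨?_, by linarith [hc.2]⟩⟩
    have := hc.1
    simp only at this
    have : z N = -(q, (-1:ℝ)) := by rw [← this]; simp
    rw [this]
    norm_num

lemma escape_top (h1 : -1 < lam) (h2 : lam < 0) (h3 : lam + a < -1) {z : ℕ → ℝ × ℝ}
    (hz : IsTraj lam a z) (hnf : ∀ n, z n ∉ fixedSet lam a) {m : ℕ} {p : ℝ}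
    (hm : z m = (p, 1)) : Exits lam a z := by
  have h1l : (0:ℝ) < 1 - lam := by linarith
  have hγ : 1 < 1 - (1 - lam) * (1 + lam + a) := by nlinarith
  have main : ∀ (m : ℕ) (p : ℝ), z m = (p, 1) → a < (1 - lam) * p → Exits lam a z := by
    intro m p hm hpl
    have hφp : 0 < (1 - lam) * p - a := by linarith
    obtain ⟨k, hk⟩ := pow_unbounded_of_one_lt (2 / ((1 - lam) * p - a)) hγ
    refine grow h1 h2 h3 hz k m p hm hpl ?_
    rw [div_lt_iff₀ hφp] at hk
    linarith
  rcases lt_trichotomy a ((1 - lam) * p) with hlt | heq | hgt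
  · exact main m p hm hlt
  · exfalso
    apply hnf m
    rw [mem_fixed_iff (by rw [hm]; norm_num [inL])]
    rw [hm]
    simp only
    rw [mul_one, ← heq]
  · -- p < a/(1-lam) : one extra step, s stays 1 and x increases past a/(1-lam)
    have hst := hz.2 m
    rw [hm] at hst
    simp only [f] at hst
    have hτ : (1:ℝ) ≤ 1 + (lam * p + a * 1) - p := by nlinarith
    rw [Phi_of_ge hτ] at hst
    refine main (m + 1) (lam * p + a * 1) hst ?_
    -- a < (1-lam)(lam p + a) given (1-lam) p < a
    nlinarith [mul_pos (show (0:ℝ) < -lam by linarith) (show (0:ℝ) < a - (1 - lam) * p by linarith)]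

lemma escape (h1 : -1 < lam) (h2 : lam < 0) (h3 : lam + a < -1) {z : ℕ → ℝ × ℝ}
    (hz : IsTraj lam a z) (h0 : z 0 ∉ fixedSet lam a) : Exits lam a z := by
  have hnf := not_fixed_all h1 h2 h3 hz h0
  obtain ⟨m, hm | hm⟩ := reach h1 h2 h3 hz h0
  · exact escape_top h1 h2 h3 hz hnf (show z m = ((z m).1, 1) from Prod.ext rfl hm)
  · apply exits_neg
    have hz' := IsTraj_neg hz
    refine escape_top h1 h2 h3 hz' ?_ (m := m) (p := -(z m).1) ?_
    · intro n hmem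
      apply hnf n
      have := neg_mem_fixed hmem
      simpa using this
    · show -(z m) = _
      rw [show z m = ((z m).1, (z m).2) from rfl, hm]
      simp

end Part5

section Part6
variable {lam a : ℝ}

lemma xs_facts (h1 : -1 < lam) (h2 : lam < 0) (h3 : lam + a < -1) :
    (1 + lam) * (-(a / (1 + lam))) = -a ∧ (2 + a) / (1 - lam) < -(a / (1 + lam))
      ∧ 1 < -(a / (1 + lam)) := by
  have h1g : (0:ℝ) < 1 + lam := by linarith
  have h1l : (0:ℝ) < 1 - lam := by linarith
  have hxs : (1 + lam) * (-(a / (1 + lam))) = -a := by field_simp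
  have hr : (1 - lam) * ((2 + a) / (1 - lam)) = 2 + a := by field_simp
  refine ⟨hxs, ?_, ?_⟩
  · nlinarith [mul_pos h1g h1l]
  · nlinarith

/-- Closed form for the trajectory once it enters the absorbing set. -/
lemma tail (h1 : -1 < lam) (h2 : lam < 0) (h3 : lam + a < -1) {z : ℕ → ℝ × ℝ}
    (hz : IsTraj lam a z) {N : ℕ} {q : ℝ} (hzN : z N = (q, 1))
    (hq : (2 + a) / (1 - lam) ≤ q) :
    ∀ k, z (N + k) = ((-1) ^ k * ((-(a / (1 + lam)))
      + (-lam) ^ k * (q - (-(a / (1 + lam))))), (-1) ^ k) := by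
  obtain ⟨hxs, hrx, hxs1⟩ := xs_facts h1 h2 h3
  have h1l : (0:ℝ) < 1 - lam := by linarith
  have hr : (1 - lam) * ((2 + a) / (1 - lam)) = 2 + a := by field_simp
  set xs := -(a / (1 + lam)) with hxsd
  clear_value xs
  have hy : ∀ k : ℕ, (2 + a) / (1 - lam) ≤ xs + (-lam) ^ k * (q - xs) := by
    intro k
    have hm0 : (0:ℝ) < (-lam) ^ k := pow_pos (by linarith) k
    have hm1 : (-lam) ^ k ≤ 1 := pow_le_one₀ (by linarith) (by linarith)
    rcases le_total xs q with h | h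
    · nlinarith
    · nlinarith
  intro k
  induction k with
  | zero =>
    simp only [Nat.add_zero, pow_zero, hzN]
    norm_num
  | succ k ih =>
    have hst := hz.2 (N + k)
    rw [ih] at hst
    simp only [f] at hst
    have hfst : lam * ((-1) ^ k * (xs + (-lam) ^ k * (q - xs))) + a * (-1) ^ k
        = (-1) ^ (k + 1) * (xs + (-lam) ^ (k + 1) * (q - xs)) := by
      linear_combination ((-1:ℝ) ^ k) * hxs
    have hτ : (-1:ℝ) ^ k + (lam * ((-1) ^ k * (xs + (-lam) ^ k * (q - xs))) + a * (-1) ^ k)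
        - (-1) ^ k * (xs + (-lam) ^ k * (q - xs))
        = (-1) ^ k * (1 - (1 - lam) * (xs + (-lam) ^ k * (q - xs)) + a) := by ring
    rw [hτ, hfst] at hst
    have hbd : 1 - (1 - lam) * (xs + (-lam) ^ k * (q - xs)) + a ≤ -1 := by
      have := mul_le_mul_of_nonneg_left (hy k) h1l.le
      rw [hr] at this
      linarith
    show z (N + k + 1) = _
    rw [hst]
    rcases Nat.even_or_odd k with he | ho
    · rw [he.neg_one_pow, one_mul, Phi_of_le hbd,
        (Even.add_one he).neg_one_pow]
    · rw [ho.neg_one_pow, Phi_of_ge (by linarith), (Odd.add_one ho).neg_one_pow]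

end Part6

section Part7
variable {lam a : ℝ}

lemma tendsto_orbit (h1 : -1 < lam) (h2 : lam < 0) (h3 : lam + a < -1) {z : ℕ → ℝ × ℝ}
    (hz : IsTraj lam a z) {N : ℕ} {q : ℝ} (hzN : z N = (q, 1))
    (hq : (2 + a) / (1 - lam) ≤ q) (b : ℕ) :
    Tendsto (fun n => z (2 * n + b)) atTop
      (𝓝 ((-1) ^ (N + b) * (-(a / (1 + lam))), (-1) ^ (N + b))) := by
  have htail := tail h1 h2 h3 hz hzN hq
  set xs := -(a / (1 + lam)) with hxsd
  clear_value xs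
  have hm0 : (0:ℝ) ≤ -lam := by linarith
  have hm2 : -lam < 1 := by linarith
  rw [Metric.tendsto_atTop]
  intro ε hε
  have hpos : 0 < ε / (|q - xs| + 1) := by positivity
  obtain ⟨K, hK⟩ := exists_pow_lt_of_lt_one hpos hm2
  refine ⟨N + K, fun n hn => ?_⟩
  have hge : N ≤ 2 * n + b := by omega
  have hNk : N + (2 * n + b - N) = 2 * n + b := by omega
  have hKk : K ≤ 2 * n + b - N := by omega
  have hthis := htail (2 * n + b - N)
  rw [hNk] at hthis
  have hpar : ((-1:ℝ)) ^ (2 * n + b - N) = (-1) ^ (N + b) := by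
    rcases Nat.even_or_odd (N + b) with hNb | hNb
    · have hk2 : Even (2 * n + b - N) := by
        rw [Nat.even_iff] at *; omega
      rw [hk2.neg_one_pow, hNb.neg_one_pow]
    · have hk2 : Odd (2 * n + b - N) := by
        rw [Nat.odd_iff] at *; omega
      rw [hk2.neg_one_pow, hNb.neg_one_pow]
  rw [hpar] at hthis
  rw [hthis, Prod.dist_eq]
  have hsnd : dist ((-1:ℝ) ^ (N + b)) ((-1:ℝ) ^ (N + b)) = 0 := by
    rw [Real.dist_eq, sub_self, abs_zero]
  have he : |((-1:ℝ)) ^ (N + b)| = 1 := by rw [abs_pow, abs_neg, abs_one, one_pow]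
  have hfst : dist ((-1:ℝ) ^ (N + b) * (xs + (-lam) ^ (2 * n + b - N) * (q - xs)))
      ((-1) ^ (N + b) * xs) = (-lam) ^ (2 * n + b - N) * |q - xs| := by
    rw [Real.dist_eq, show ((-1:ℝ)) ^ (N + b) * (xs + (-lam) ^ (2 * n + b - N) * (q - xs))
        - (-1) ^ (N + b) * xs = (-1) ^ (N + b) * ((-lam) ^ (2 * n + b - N) * (q - xs)) from by
      ring, abs_mul, he, one_mul, abs_mul, abs_pow, abs_of_nonneg hm0]
  rw [hfst, hsnd]
  have hb1 : (-lam) ^ (2 * n + b - N) * |q - xs| ≤ (-lam) ^ K * |q - xs| :=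
    mul_le_mul_of_nonneg_right (pow_le_pow_of_le_one hm0 hm2.le hKk) (abs_nonneg _)
  have hb2 : (-lam) ^ K * (|q - xs| + 1) < ε :=
    (lt_div_iff₀ (by positivity : (0:ℝ) < |q - xs| + 1)).mp hK
  have hb3 : (-lam) ^ K * |q - xs| ≤ (-lam) ^ K * (|q - xs| + 1) := by
    nlinarith [pow_nonneg hm0 K]
  exact max_lt (by linarith) hε

end Part7



section Part8
variable {lam a : ℝ}

lemma conv_top (h1 : -1 < lam) (h2 : lam < 0) (h3 : lam + a < -1) {z : ℕ → ℝ × ℝ}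
    (hz : IsTraj lam a z) {N : ℕ} {q : ℝ} (hzN : z N = (q, 1))
    (hq : (2 + a) / (1 - lam) ≤ q) :
    ConvTo2Orbit z (-(a / (1 + lam)), 1) (a / (1 + lam), -1) := by
  have T0 := tendsto_orbit h1 h2 h3 hz hzN hq 0
  have T1 := tendsto_orbit h1 h2 h3 hz hzN hq 1
  simp only [Nat.add_zero] at T0
  rcases Nat.even_or_odd N with hN | hN
  · left
    constructor
    · rw [hN.neg_one_pow] at T0
      simpa using T0
    · rw [(hN.add_one).neg_one_pow] at T1
      have : ((-1:ℝ) * -(a / (1 + lam)), (-1:ℝ)) = ((a / (1 + lam)), (-1:ℝ)) := by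
        norm_num
      rwa [this] at T1
  · right
    constructor
    · rw [hN.neg_one_pow] at T0
      have : ((-1:ℝ) * -(a / (1 + lam)), (-1:ℝ)) = ((a / (1 + lam)), (-1:ℝ)) := by
        norm_num
      rwa [this] at T0
    · rw [(hN.add_one).neg_one_pow, one_mul] at T1
      exact T1

lemma conv_exit (h1 : -1 < lam) (h2 : lam < 0) (h3 : lam + a < -1) {z : ℕ → ℝ × ℝ}
    (hz : IsTraj lam a z) (he : Exits lam a z) :
    ConvTo2Orbit z (-(a / (1 + lam)), 1) (a / (1 + lam), -1) := by
  obtain ⟨N, q, ⟨hzN, hq⟩ | ⟨hzN, hq⟩⟩ := he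
  · exact conv_top h1 h2 h3 hz hzN hq
  · -- bottom entry: use the negated trajectory
    have hz' := IsTraj_neg hz
    have hzN' : (fun n => -(z n)) N = (-q, 1) := by
      show -(z N) = _
      rw [hzN]; simp
    have hq' : (2 + a) / (1 - lam) ≤ -q := by linarith
    have hc := conv_top h1 h2 h3 hz' hzN' hq'
    have hQ : -((-(a / (1 + lam)), (1:ℝ))) = ((a / (1 + lam)), (-1:ℝ)) := by simp
    have hQ' : -(((a / (1 + lam)), (-1:ℝ))) = (-(a / (1 + lam)), (1:ℝ)) := by simp
    rcases hc with ⟨hA, hB⟩ | ⟨hA, hB⟩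
    · right
      constructor
      · have := hA.neg
        simp only [hQ] at this
        simpa using this
      · have := hB.neg
        simp only [hQ'] at this
        simpa using this
    · left
      constructor
      · have := hA.neg
        simp only [hQ'] at this
        simpa using this
      · have := hB.neg
        simp only [hQ] at this
        simpa using this

lemma conv_all (h1 : -1 < lam) (h2 : lam < 0) (h3 : lam + a < -1) {z : ℕ → ℝ × ℝ}
    (hz : IsTraj lam a z) (h0 : z 0 ∉ fixedSet lam a) :
    ConvTo2Orbit z (-(a / (1 + lam)), 1) (a / (1 + lam), -1) :=
  conv_exit h1 h2 h3 hz (escape h1 h2 h3 hz h0)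

end Part8



section Part9
variable {lam a : ℝ}

lemma dist_fst_le' (u v : ℝ × ℝ) : dist u.1 v.1 ≤ dist u v := by
  rw [Prod.dist_eq]; exact le_max_left _ _

lemma dist_snd_le' (u v : ℝ × ℝ) : dist u.2 v.2 ≤ dist u v := by
  rw [Prod.dist_eq]; exact le_max_right _ _

lemma unstable (h1 : -1 < lam) (h2 : lam < 0) (h3 : lam + a < -1) {P : ℝ × ℝ}
    (hP : P ∈ fixedSet lam a) : ¬ IsStableFixed lam a P := by
  intro hst
  have h1g : (0:ℝ) < 1 + lam := by linarith
  have h1l : (0:ℝ) < 1 - lam := by linarith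
  have ha : a < 0 := by linarith
  have hq1 : (1 + lam) * (-(a / (1 + lam))) = -a := by field_simp
  have hq2 : (1 - lam) * (a / (1 - lam)) = a := by field_simp
  have hE : 0 < -(a / (1 + lam)) + a / (1 - lam) := by
    nlinarith [mul_pos h1g h1l, mul_pos (show (0:ℝ) < -a by linarith)
      (show (0:ℝ) < -lam by linarith)]
  set E := -(a / (1 + lam)) + a / (1 - lam) with hEd
  clear_value E
  obtain ⟨δ, hδ, hprop⟩ := hst (E / 2) (by linarith)
  have hPfix : (1 - lam) * P.1 = a * P.2 := (mem_fixed_iff hP.1).mp hP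
  have hPs : |P.2| ≤ 1 := hP.1
  -- bound on |P.1|
  have hPabs : (1 - lam) * |P.1| ≤ -a := by
    have : |(1 - lam) * P.1| = |a * P.2| := by rw [hPfix]
    rw [abs_mul, abs_mul, abs_of_pos h1l, abs_of_neg ha] at this
    nlinarith [abs_nonneg P.1]
  have hPub : P.1 ≤ -(a / (1 - lam)) := by
    have h4 : P.1 ≤ |P.1| := le_abs_self P.1
    nlinarith
  have hPlb : a / (1 - lam) ≤ P.1 := by
    have h4 : -|P.1| ≤ P.1 := neg_abs_le P.1
    nlinarith
  -- the perturbed trajectory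
  set z : ℕ → ℝ × ℝ := fun n => (f lam a)^[n] (P.1 + δ / 2, P.2) with hzd
  have hz0 : z 0 = (P.1 + δ / 2, P.2) := rfl
  have htraj : IsTraj lam a z := by
    constructor
    · intro n
      cases n with
      | zero => exact hPs
      | succ n =>
        show inL ((f lam a)^[n + 1] _)
        rw [Function.iterate_succ_apply']
        exact f_inL lam a _
    · intro n
      show (f lam a)^[n + 1] _ = _
      rw [Function.iterate_succ_apply']
  have hd0 : dist (z 0) P < δ := by
    rw [hz0, Prod.dist_eq]
    have e1 : dist (P.1 + δ / 2) P.1 = δ / 2 := by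
      rw [Real.dist_eq]; rw [show P.1 + δ / 2 - P.1 = δ / 2 by ring]
      exact abs_of_pos (by linarith)
    have e2 : dist P.2 P.2 = 0 := dist_self _
    rw [show ((P.1 + δ / 2, P.2) : ℝ × ℝ).1 = P.1 + δ / 2 from rfl,
      show ((P.1 + δ / 2, P.2) : ℝ × ℝ).2 = P.2 from rfl, e1, e2]
    rw [max_eq_left (by linarith)]
    linarith
  have hn0 : z 0 ∉ fixedSet lam a := by
    rw [hz0]
    intro hmem
    have := (mem_fixed_iff (show inL ((P.1 + δ / 2, P.2) : ℝ × ℝ) from hPs)).mp hmem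
    simp only at this
    nlinarith
  have hall := hprop z htraj hd0
  have hQfar : E ≤ |(-(a / (1 + lam))) - P.1| := by
    rw [le_abs]; left; linarith
  have hQ'far : E ≤ |(a / (1 + lam)) - P.1| := by
    rw [le_abs]; right
    have : -(a / (1 + lam)) ≥ 1 := by nlinarith [xs_facts h1 h2 h3]
    nlinarith [(xs_facts h1 h2 h3).2.2]
  rcases conv_all h1 h2 h3 htraj hn0 with ⟨hA, -⟩ | ⟨hA, -⟩
  · rw [Metric.tendsto_atTop] at hA
    obtain ⟨M, hM⟩ := hA (E / 2) (by linarith)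
    have hclose := hM M le_rfl
    have hfar := hall (2 * M)
    have htri : dist ((-(a / (1 + lam)), (1:ℝ))) P ≤ dist ((-(a / (1 + lam)), (1:ℝ))) (z (2 * M)) + dist (z (2 * M)) P := dist_triangle _ _ _
    have hcomp : |(-(a / (1 + lam))) - P.1| ≤ dist ((-(a / (1 + lam)), (1:ℝ))) P := by
      have := dist_fst_le' ((-(a / (1 + lam)), (1:ℝ))) P
      rwa [Real.dist_eq] at this
    rw [dist_comm] at hclose
    linarith
  · rw [Metric.tendsto_atTop] at hA
    obtain ⟨M, hM⟩ := hA (E / 2) (by linarith)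
    have hclose := hM M le_rfl
    have hfar := hall (2 * M)
    have htri : dist (((a / (1 + lam)), (-1:ℝ))) P ≤ dist (((a / (1 + lam)), (-1:ℝ))) (z (2 * M)) + dist (z (2 * M)) P := dist_triangle _ _ _
    have hcomp : |(a / (1 + lam)) - P.1| ≤ dist (((a / (1 + lam)), (-1:ℝ))) P := by
      have := dist_fst_le' (((a / (1 + lam)), (-1:ℝ))) P
      rwa [Real.dist_eq] at this
    rw [dist_comm] at hclose
    linarith

end Part9



section Part10
variable {lam a : ℝ}

/-- One step from near Q lands exactly on the alternating regime, close to Q'. -/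
lemma near_step (h1 : -1 < lam) (h2 : lam < 0) (h3 : lam + a < -1) {w : ℕ → ℝ × ℝ}
    (hw : IsTraj lam a w) {δ : ℝ} (hδ : 0 < δ)
    (hd : dist (w 0) (-(a / (1 + lam)), 1) < δ)
    (hg1 : (|lam| + |a| + 2) * δ ≤ 2 * (-(a / (1 + lam))) - 2)
    (hg2 : (|lam| + |a| + 1) * δ ≤ -(a / (1 + lam)) - (2 + a) / (1 - lam)) :
    w 1 = (lam * (w 0).1 + a * (w 0).2, -1) ∧
      -(lam * (w 0).1 + a * (w 0).2) ≥ (2 + a) / (1 - lam) ∧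
      |(lam * (w 0).1 + a * (w 0).2) - (a / (1 + lam))| ≤ (|lam| + |a|) * δ := by
  obtain ⟨hxs, hrx, hxs1⟩ := xs_facts h1 h2 h3
  have h1g : (0:ℝ) < 1 + lam := by linarith
  have hlamxs : lam * (-(a / (1 + lam))) + a = a / (1 + lam) := by
    linear_combination hxs
  have h01 : |(w 0).1 - (-(a / (1 + lam)))| < δ := by
    have := dist_fst_le' (w 0) (-(a / (1 + lam)), 1)
    rw [Real.dist_eq] at this; exact lt_of_le_of_lt this hd
  have h02 : |(w 0).2 - 1| < δ := by
    have := dist_snd_le' (w 0) (-(a / (1 + lam)), 1)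
    rw [Real.dist_eq] at this; exact lt_of_le_of_lt this hd
  have hxb : |(lam * (w 0).1 + a * (w 0).2) - (a / (1 + lam))| ≤ (|lam| + |a|) * δ := by
    have hid : (lam * (w 0).1 + a * (w 0).2) - (a / (1 + lam))
        = lam * ((w 0).1 - (-(a / (1 + lam)))) + a * ((w 0).2 - 1) := by
      linear_combination hlamxs
    rw [hid]
    calc |lam * ((w 0).1 - (-(a / (1 + lam)))) + a * ((w 0).2 - 1)|
        ≤ |lam * ((w 0).1 - (-(a / (1 + lam))))| + |a * ((w 0).2 - 1)| := abs_add_le _ _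
      _ = |lam| * |(w 0).1 - (-(a / (1 + lam)))| + |a| * |(w 0).2 - 1| := by
          rw [abs_mul, abs_mul]
      _ ≤ |lam| * δ + |a| * δ := by
          have e1 := mul_le_mul_of_nonneg_left h01.le (abs_nonneg lam)
          have e2 := mul_le_mul_of_nonneg_left h02.le (abs_nonneg a)
          linarith
      _ = (|lam| + |a|) * δ := by ring
  have habs1 := abs_le.mp h01.le
  have habs2 := abs_le.mp h02.le
  have habs3 := abs_le.mp hxb
  -- τ ≤ -1
  have hτ : (w 0).2 + (lam * (w 0).1 + a * (w 0).2) - (w 0).1 ≤ -1 := by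
    linarith [habs1.1, habs2.2, habs3.2]
  have hst := hw.2 0
  simp only [f] at hst
  rw [Phi_of_le hτ] at hst
  refine ⟨hst, ?_, hxb⟩
  linarith [habs3.2]

lemma stable_orbit (h1 : -1 < lam) (h2 : lam < 0) (h3 : lam + a < -1) :
    IsStableSet lam a {(-(a / (1 + lam)), 1), (a / (1 + lam), -1)} := by
  obtain ⟨hxs, hrx, hxs1⟩ := xs_facts h1 h2 h3
  intro ε hε
  set C := |lam| + |a| with hCd
  have hC0 : 0 ≤ C := by positivity
  have hg1pos : 0 < 2 * (-(a / (1 + lam))) - 2 := by linarith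
  have hg2pos : 0 < -(a / (1 + lam)) - (2 + a) / (1 - lam) := by linarith
  set δ := min (min ((2 * (-(a / (1 + lam))) - 2) / (C + 2))
      ((-(a / (1 + lam)) - (2 + a) / (1 - lam)) / (C + 1))) (ε / (C + 1)) with hδd
  have hδpos : 0 < δ := by
    apply lt_min (lt_min _ _) _ <;> positivity
  have hδ1 : (C + 2) * δ ≤ 2 * (-(a / (1 + lam))) - 2 := by
    have h4 : δ ≤ (2 * (-(a / (1 + lam))) - 2) / (C + 2) :=
      le_trans (min_le_left _ _) (min_le_left _ _)
    rw [le_div_iff₀ (by positivity : (0:ℝ) < C + 2)] at h4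
    linarith
  have hδ2 : (C + 1) * δ ≤ -(a / (1 + lam)) - (2 + a) / (1 - lam) := by
    have h4 : δ ≤ (-(a / (1 + lam)) - (2 + a) / (1 - lam)) / (C + 1) :=
      le_trans (min_le_left _ _) (min_le_right _ _)
    rw [le_div_iff₀ (by positivity : (0:ℝ) < C + 1)] at h4
    linarith
  have hδ3 : (C + 1) * δ ≤ ε := by
    have h4 : δ ≤ ε / (C + 1) := min_le_right _ _
    rw [le_div_iff₀ (by positivity : (0:ℝ) < C + 1)] at h4
    linarith
  clear_value C δ
  refine ⟨δ, hδpos, ?_⟩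
  intro z hz hd0 n
  -- key: trajectories starting δ-close to Q stay Cδ-close to the orbit from step 1 on
  have key : ∀ w : ℕ → ℝ × ℝ, IsTraj lam a w → dist (w 0) (-(a / (1 + lam)), 1) < δ →
      ∀ k : ℕ, min (dist (w (k + 1)) ((-(a / (1 + lam)), 1) : ℝ × ℝ))
        (dist (w (k + 1)) (((a / (1 + lam)), -1) : ℝ × ℝ)) ≤ C * δ := by
    intro w hw hd k
    obtain ⟨hw1, hw1r, hw1b⟩ := near_step h1 h2 h3 hw hδpos hd
      (by rw [hCd] at hδ1; exact hδ1) (by rw [hCd] at hδ2; exact hδ2)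
    rw [← hCd] at hw1b
    -- negated trajectory enters the absorbing set at time 1
    have hv := IsTraj_neg hw
    have hv1 : (fun n => -(w n)) 1 = (-(lam * (w 0).1 + a * (w 0).2), 1) := by
      show -(w 1) = _
      rw [hw1]; simp
    have htl := tail h1 h2 h3 hv hv1 hw1r k
    have hwk := congrArg Neg.neg htl
    simp only [neg_neg, Prod.neg_mk] at hwk
    have hd1 : |(-(lam * (w 0).1 + a * (w 0).2)) - (-(a / (1 + lam)))| ≤ C * δ := by
      rw [show (-(lam * (w 0).1 + a * (w 0).2)) - (-(a / (1 + lam)))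
        = -((lam * (w 0).1 + a * (w 0).2) - (a / (1 + lam))) by ring, abs_neg]
      exact hw1b
    have hmk : (0:ℝ) < (-lam) ^ k := pow_pos (by linarith) k
    have hmk1 : (-lam) ^ k ≤ 1 := pow_le_one₀ (by linarith) (by linarith)
    have hbound : |(-lam) ^ k * ((-(lam * (w 0).1 + a * (w 0).2)) - (-(a / (1 + lam))))|
        ≤ C * δ := by
      rw [abs_mul, abs_pow, abs_of_nonneg (by linarith : (0:ℝ) ≤ -lam)]
      calc (-lam) ^ k * |(-(lam * (w 0).1 + a * (w 0).2)) - (-(a / (1 + lam)))|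
          ≤ 1 * |(-(lam * (w 0).1 + a * (w 0).2)) - (-(a / (1 + lam)))| :=
            mul_le_mul_of_nonneg_right hmk1 (abs_nonneg _)
        _ ≤ C * δ := by rw [one_mul]; exact hd1
    rw [show k + 1 = 1 + k by omega]
    rcases Nat.even_or_odd k with hk | hk
    · -- w (1+k) close to Q'
      rw [hk.neg_one_pow] at hwk
      simp only [one_mul] at hwk
      refine le_trans (min_le_right _ _) ?_
      rw [hwk, Prod.dist_eq]
      have e1 : dist (-((-(a / (1 + lam))) + (-lam) ^ k * ((-(lam * (w 0).1 + a * (w 0).2))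
          - (-(a / (1 + lam)))))) (a / (1 + lam)) ≤ C * δ := by
        rw [Real.dist_eq, show -((-(a / (1 + lam))) + (-lam) ^ k * ((-(lam * (w 0).1
          + a * (w 0).2)) - (-(a / (1 + lam))))) - (a / (1 + lam))
          = -((-lam) ^ k * ((-(lam * (w 0).1 + a * (w 0).2)) - (-(a / (1 + lam))))) by ring,
          abs_neg]
        exact hbound
      refine max_le e1 ?_
      have e2 : dist (-(1:ℝ)) ((a / (1 + lam), (-1:ℝ)).2) = 0 := dist_self _
      rw [e2]
      positivity
    · -- w (1+k) close to Q
      rw [hk.neg_one_pow] at hwk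
      simp only [neg_one_mul, neg_neg] at hwk
      refine le_trans (min_le_left _ _) ?_
      rw [hwk, Prod.dist_eq]
      have e1 : dist ((-(a / (1 + lam))) + (-lam) ^ k * ((-(lam * (w 0).1 + a * (w 0).2))
          - (-(a / (1 + lam))))) (-(a / (1 + lam))) ≤ C * δ := by
        rw [Real.dist_eq, add_sub_cancel_left]
        exact hbound
      refine max_le e1 ?_
      have e2 : dist (1:ℝ) (((-(a / (1 + lam))), (1:ℝ)).2) = 0 := dist_self _
      rw [e2]
      positivity
  -- decompose the infDist hypothesis
  have hne : ({(-(a / (1 + lam)), 1), (a / (1 + lam), -1)} : Set (ℝ × ℝ)).Nonempty :=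
    ⟨_, Set.mem_insert _ _⟩
  have hQmem : ((-(a / (1 + lam)), 1) : ℝ × ℝ) ∈
      ({(-(a / (1 + lam)), 1), (a / (1 + lam), -1)} : Set (ℝ × ℝ)) := Set.mem_insert _ _
  have hQ'mem : (((a / (1 + lam)), -1) : ℝ × ℝ) ∈
      ({(-(a / (1 + lam)), 1), (a / (1 + lam), -1)} : Set (ℝ × ℝ)) :=
    Set.mem_insert_iff.mpr (Or.inr rfl)
  obtain ⟨y, hy, hdy⟩ := (Metric.infDist_lt_iff hne).mp hd0
  have hCδε : C * δ < ε := by nlinarith [mul_pos (show (0:ℝ) < C + 1 by linarith) hδpos]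
  have hδε : δ ≤ ε := by nlinarith [mul_nonneg hC0 hδpos.le]
  cases n with
  | zero =>
    calc Metric.infDist (z 0) _ ≤ dist (z 0) y := Metric.infDist_le_dist_of_mem hy
      _ < δ := hdy
      _ ≤ ε := hδε
  | succ k =>
    rcases Set.mem_insert_iff.mp hy with hyQ | hyQ'
    · -- start near Q
      have hmin := key z hz (by rwa [hyQ] at hdy) k
      have hil := Metric.infDist_le_dist_of_mem (x := z (k + 1)) hQmem
      have hir := Metric.infDist_le_dist_of_mem (x := z (k + 1)) hQ'mem
      rcases le_total (dist (z (k + 1)) ((-(a / (1 + lam)), 1) : ℝ × ℝ))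
        (dist (z (k + 1)) (((a / (1 + lam)), -1) : ℝ × ℝ)) with hmm | hmm
      · rw [min_eq_left hmm] at hmin; linarith
      · rw [min_eq_right hmm] at hmin; linarith
    · -- start near Q' : use the negated trajectory
      have hyQ'' : y = ((a / (1 + lam)), -1) := hyQ'
      have hw := IsTraj_neg hz
      have hd0' : dist ((fun n => -(z n)) 0) (-(a / (1 + lam)), 1) < δ := by
        show dist (-(z 0)) _ < δ
        rw [show ((-(a / (1 + lam)), 1) : ℝ × ℝ) = -((a / (1 + lam)), -1) by simp,
          dist_neg_neg]
        rwa [hyQ''] at hdy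
      have hmin := key _ hw hd0' k
      have e1 : dist ((fun n => -(z n)) (k + 1)) ((-(a / (1 + lam)), 1) : ℝ × ℝ)
          = dist (z (k + 1)) (((a / (1 + lam)), -1) : ℝ × ℝ) := by
        show dist (-(z (k + 1))) _ = _
        rw [show ((-(a / (1 + lam)), 1) : ℝ × ℝ) = -((a / (1 + lam)), -1) by simp,
          dist_neg_neg]
      have e2 : dist ((fun n => -(z n)) (k + 1)) (((a / (1 + lam)), -1) : ℝ × ℝ)
          = dist (z (k + 1)) ((-(a / (1 + lam)), 1) : ℝ × ℝ) := by
        show dist (-(z (k + 1))) _ = _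
        rw [show (((a / (1 + lam)), -1) : ℝ × ℝ) = -(-(a / (1 + lam)), 1) by simp,
          dist_neg_neg]
      rw [e1, e2] at hmin
      have hil := Metric.infDist_le_dist_of_mem (x := z (k + 1)) hQmem
      have hir := Metric.infDist_le_dist_of_mem (x := z (k + 1)) hQ'mem
      rcases le_total (dist (z (k + 1)) (((a / (1 + lam)), -1) : ℝ × ℝ))
        (dist (z (k + 1)) ((-(a / (1 + lam)), 1) : ℝ × ℝ)) with hmm | hmm
      · rw [min_eq_left hmm] at hmin; linarith
      · rw [min_eq_right hmm] at hmin; linarith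

end Part10

/-- Case (d): −1 < λ < 0, β < −1. All fixed points are unstable and every
non-equilibrium trajectory converges to the stable 2-periodic orbit ±Q. -/
theorem stmt6 (lam a : ℝ) (h1 : -1 < lam) (h2 : lam < 0) (h3 : lam + a < -1) :
    (∀ P ∈ fixedSet lam a, ¬ IsStableFixed lam a P) ∧
    IsStableSet lam a {(-(a / (1 + lam)), 1), (a / (1 + lam), -1)} ∧
    (∀ z : ℕ → ℝ × ℝ, IsTraj lam a z → z 0 ∉ fixedSet lam a →
      ConvTo2Orbit z (-(a / (1 + lam)), 1) (a / (1 + lam), -1)) :=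
  ⟨fun _ hP => unstable h1 h2 h3 hP, stable_orbit h1 h2 h3,
    fun _ hz h0 => conv_all h1 h2 h3 hz h0⟩
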